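/- arXiv:1510.04022 — 2 statements merged into one kernel-verified Lean document; each statement's English description precedes it below -/
import Mathlib

section
/- The vector field K⁽¹⁾ = −2Φ̂ ∂/∂U − e^{2U}(e^{−2U}Φ̂² + 1) ∂/∂Φ̂ = −2Φ̂ ∂/∂U − (Φ̂² + e^{2U}) ∂/∂Φ̂ is a Killing vector field of the metric G = (1/(1+α²))(dU² + dΨ² − e^{−2U} dΦ̂²) on ℝ³. -/
/-- Partial derivative of a function on ℝ³ in the `i`-th coordinate direction. -/
noncomputable def pd (i : Fin 3) (f : (Fin 3 → ℝ) → ℝ) (x : Fin 3 → ℝ) : ℝ :=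
  fderiv ℝ f x (Pi.single i 1)

/-- The target-space metric G = (1/(1+α²))(dU² + dΨ² − e^{−2U} dΦ̂²) on ℝ³
with coordinates (U, Ψ, Φ̂) = (x 0, x 1, x 2). -/
noncomputable def Gmat (α : ℝ) (x : Fin 3 → ℝ) : Matrix (Fin 3) (Fin 3) ℝ :=
  (1 / (1 + α ^ 2)) • !![1, 0, 0; 0, 1, 0; 0, 0, -Real.exp (-2 * x 0)]

/-- A vector field `K` is Killing for `Gmat α` iff the coordinate Lie derivative
(L_K G)_{ij} = K^k ∂_k G_{ij} + G_{kj} ∂_i K^k + G_{ik} ∂_j K^k vanishes. -/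
def IsKilling (α : ℝ) (K : (Fin 3 → ℝ) → Fin 3 → ℝ) : Prop :=
  ∀ x : Fin 3 → ℝ, ∀ i j : Fin 3,
    (∑ k : Fin 3, (K x k * pd k (fun y => Gmat α y i j) x
      + Gmat α x k j * pd i (fun y => K y k) x
      + Gmat α x i k * pd j (fun y => K y k) x)) = 0

lemma pd_of {f : (Fin 3 → ℝ) → ℝ} {L : (Fin 3 → ℝ) →L[ℝ] ℝ} {x : Fin 3 → ℝ}
    (h : HasFDerivAt (𝕜 := ℝ) f L x) (i : Fin 3) : pd i f x = L (Pi.single i 1) := by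
  rw [pd, h.fderiv]

lemma hproj (k : Fin 3) (x : Fin 3 → ℝ) :
    HasFDerivAt (𝕜 := ℝ) (fun y : Fin 3 → ℝ => y k)
      (ContinuousLinearMap.proj (R := ℝ) (φ := fun _ : Fin 3 => ℝ) k) x :=
  (ContinuousLinearMap.proj (R := ℝ) (φ := fun _ : Fin 3 => ℝ) k).hasFDerivAt

lemma hexp (d : ℝ) (x : Fin 3 → ℝ) :
    HasFDerivAt (𝕜 := ℝ) (fun y : Fin 3 → ℝ => Real.exp (d * y 0))
      ((Real.exp (d * x 0) * d) • ContinuousLinearMap.proj (R := ℝ) (φ := fun _ : Fin 3 => ℝ) 0) x := by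
  have h1 := (hproj 0 x).const_mul d
  have h2 := (Real.hasDerivAt_exp (d * x 0)).comp_hasFDerivAt x h1
  have h3 : HasFDerivAt (𝕜 := ℝ) (fun y : Fin 3 → ℝ => Real.exp (d * y 0))
      (Real.exp (d * x 0) • d • ContinuousLinearMap.proj (R := ℝ) (φ := fun _ : Fin 3 => ℝ) 0) x := h2
  convert h3 using 1
  rw [smul_smul]

lemma pd_lin (x : Fin 3 → ℝ) (i : Fin 3) (c : ℝ) :
    pd i (fun y : Fin 3 → ℝ => c * y 2) x = c * (Pi.single i 1 : Fin 3 → ℝ) 2 := by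
  rw [pd_of (((hproj 2 x)).const_mul c) i]; simp

lemma pd_cexp (x : Fin 3 → ℝ) (i : Fin 3) (c d : ℝ) :
    pd i (fun y : Fin 3 → ℝ => c * Real.exp (d * y 0)) x
      = c * Real.exp (d * x 0) * d * (Pi.single i 1 : Fin 3 → ℝ) 0 := by
  rw [pd_of ((hexp d x).const_mul c) i]; simp; ring

lemma pd_K2 (x : Fin 3 → ℝ) (i : Fin 3) :
    pd i (fun y : Fin 3 → ℝ => -(y 2 ^ 2 + Real.exp (2 * y 0))) x
      = -(2 * x 2 * (Pi.single i 1 : Fin 3 → ℝ) 2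
          + Real.exp (2 * x 0) * 2 * (Pi.single i 1 : Fin 3 → ℝ) 0) := by
  have hsq : HasFDerivAt (𝕜 := ℝ) (fun y : Fin 3 → ℝ => y 2 ^ 2)
      (x 2 • ContinuousLinearMap.proj (R := ℝ) (φ := fun _ : Fin 3 => ℝ) 2
        + x 2 • ContinuousLinearMap.proj (R := ℝ) (φ := fun _ : Fin 3 => ℝ) 2) x := by
    have hm : HasFDerivAt (𝕜 := ℝ) (fun y : Fin 3 → ℝ => y 2 * y 2)
        (x 2 • ContinuousLinearMap.proj (R := ℝ) (φ := fun _ : Fin 3 => ℝ) 2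
          + x 2 • ContinuousLinearMap.proj (R := ℝ) (φ := fun _ : Fin 3 => ℝ) 2) x :=
      (hproj 2 x).mul (hproj 2 x)
    simpa only [← pow_two] using hm
  have h3 := (hsq.add (hexp 2 x)).neg
  rw [pd_of (f := fun y => -(y 2 ^ 2 + Real.exp (2 * y 0))) h3 i]; simp; ring

lemma pd_zero_fun (i : Fin 3) (x : Fin 3 → ℝ) (c : ℝ) : pd i (fun _ => c) x = 0 := by
  simp [pd]

lemma pd_G (α : ℝ) (x : Fin 3 → ℝ) (k i j : Fin 3) :
    pd k (fun y => Gmat α y i j) x =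
      (if i = 2 ∧ j = 2 then
        (1/(1+α^2)) * Real.exp (-2*x 0) * 2 * (Pi.single k 1 : Fin 3 → ℝ) 0 else 0) := by
  by_cases h : i = 2 ∧ j = 2
  · obtain ⟨rfl, rfl⟩ := h
    rw [if_pos ⟨rfl, rfl⟩]
    have e : (fun y : Fin 3 → ℝ => Gmat α y 2 2)
        = fun y => (-(1/(1+α^2))) * Real.exp ((-2) * y 0) := by
      funext y; simp [Gmat]
    rw [e, pd_cexp]; ring
  · rw [if_neg h]
    have e : (fun y : Fin 3 → ℝ => Gmat α y i j) = fun _ => Gmat α x i j := by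
      funext y; fin_cases i <;> fin_cases j <;> simp_all [Gmat]
    rw [e, pd_zero_fun]

/-- K⁽¹⁾ = −2Φ̂ ∂/∂U − (Φ̂² + e^{2U}) ∂/∂Φ̂ is a Killing vector field of G. -/
theorem killing_K1 (α : ℝ) :
    IsKilling α (fun x => ![-2 * x 2, 0, -((x 2) ^ 2 + Real.exp (2 * x 0))]) := by
  intro x i j
  fin_cases i <;> fin_cases j <;>
    simp only [Fin.sum_univ_three, Matrix.cons_val_zero, Matrix.cons_val_one,
      Matrix.head_cons, Matrix.cons_val_two, Matrix.tail_cons, Fin.isValue] <;>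
    simp only [pd_G, pd_lin, pd_K2, pd_zero_fun] <;>
    simp [Gmat, Pi.single_apply, Real.exp_neg, neg_mul, mul_comm, Matrix.vecHead,
      Matrix.vecTail] <;>
    field_simp <;> ring
end

section
/- Let α ∈ ℝ, and suppose M, q, Q satisfy the black-hole condition α√(M_α² − Q_α²) = αM − q with M_α² > Q_α², M_α > 0 (here M_α = M + αq, Q_α = √(1+α²)Q). Then the photon-sphere inequality √(M_α² − Q_α²) + α(αM − q) > (1/2)√(1+α²)·√(M_α² − Q_α² + (q − αM)²) holds. -/
/-- under the black-hole condition α√(M_α² − Q_α²) = αM − q with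
M_α² > Q_α² and M_α > 0, the photon-sphere inequality
√(M_α² − Q_α²) + α(αM − q) > (1/2)√(1+α²)√(M_α² − Q_α² + (q − αM)²) holds;
thus every EMD black hole possesses a photon sphere. -/
theorem black_hole_photon_sphere (M q Q α : ℝ)
    (hM2 : (M + α * q) ^ 2 > (Real.sqrt (1 + α ^ 2) * Q) ^ 2)
    (hMα : M + α * q > 0)
    (hbh : α * Real.sqrt ((M + α * q) ^ 2 - (Real.sqrt (1 + α ^ 2) * Q) ^ 2)
      = α * M - q) :
    Real.sqrt ((M + α * q) ^ 2 - (Real.sqrt (1 + α ^ 2) * Q) ^ 2)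
        + α * (α * M - q)
      > (1 / 2) * Real.sqrt (1 + α ^ 2)
        * Real.sqrt ((M + α * q) ^ 2 - (Real.sqrt (1 + α ^ 2) * Q) ^ 2
            + (q - α * M) ^ 2) := by
  set D := (M + α * q) ^ 2 - (Real.sqrt (1 + α ^ 2) * Q) ^ 2 with hD
  have hDpos : 0 < D := by linarith
  set s := Real.sqrt D with hs
  have hspos : 0 < s := Real.sqrt_pos.mpr hDpos
  have hsq : s ^ 2 = D := Real.sq_sqrt hDpos.le
  have hqm : q - α * M = -(α * s) := by linarith [hbh]
  have h1 : D + (q - α * M) ^ 2 = (1 + α ^ 2) * s ^ 2 := by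
    rw [hqm, ← hsq]; ring
  have h2 : Real.sqrt (D + (q - α * M) ^ 2) = Real.sqrt (1 + α ^ 2) * s := by
    rw [h1, Real.sqrt_mul (by positivity), Real.sqrt_sq hspos.le]
  have h3 : Real.sqrt (1 + α ^ 2) * Real.sqrt (1 + α ^ 2) = 1 + α ^ 2 :=
    Real.mul_self_sqrt (by positivity)
  have hαMq : α * (α * M - q) = α ^ 2 * s := by
    rw [← hbh]; ring
  rw [h2, hαMq]
  nlinarith [hspos, h3]
end
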